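/- Let g = h ⊕ p, where h is a Lie algebra acting on a vector space p via a representation α, and η is an α-invariant h-valued antisymmetric bilinear form on p. Define a bracket on g extending the bracket of h by [h,p] = α(h)(p) and [p₁,p₂] = η(p₁,p₂). Then this bracket satisfies the Jacobi identity if and only if the curvature tensor R = α ∘ η satisfies the first Bianchi identity: R(p₁,p₂)p₃ + R(p₂,p₃)p₁ + R(p₃,p₁)p₂ = 0 for all p₁,p₂,p₃ ∈ p. -/

import Mathlib

/-!
The `h`-component of the Jacobiator of the extended bracket vanishes identically: invariance
and antisymmetry of `η` cancel all `η`-terms, leaving the Jacobi identity of `h`. Since `α` is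
a Lie algebra morphism, the terms `α x (α y r)` in the `p`-component cancel cyclically, and what
remains is minus the Bianchi sum of the `p`-components. So the Jacobiator vanishes exactly when
`R` satisfies the Bianchi identity.
-/

attribute [local instance 100] LieRing.ofAssociativeRing

/-- The bracket on `g = h ⊕ p` extending the bracket of `h`, with `[h,p] = α(h)(p)` and
`[p₁,p₂] = η(p₁,p₂)`. -/
def extBracket {H P : Type*} [LieRing H] [LieAlgebra ℂ H] [AddCommGroup P] [Module ℂ P]
    (α : H →ₗ⁅ℂ⁆ Module.End ℂ P) (η : P →ₗ[ℂ] P →ₗ[ℂ] H) :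
    H × P → H × P → H × P :=
  fun a b => (⁅a.1, b.1⁆ + η a.2 b.2, α a.1 b.2 - α b.1 a.2)

section ExtJacobiator

variable {H P : Type*} [LieRing H] [LieAlgebra ℂ H] [AddCommGroup P] [Module ℂ P]
  (α : H →ₗ⁅ℂ⁆ Module.End ℂ P) (η : P →ₗ[ℂ] P →ₗ[ℂ] H)

def extJacobiator (a b c : H × P) : H × P :=
  extBracket α η a (extBracket α η b c) + extBracket α η b (extBracket α η c a) +
    extBracket α η c (extBracket α η a b)

theorem extJacobiator_fst (hanti : ∀ p q : P, η p q = -η q p)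
    (hinv : ∀ (x : H) (p q : P), ⁅x, η p q⁆ = η (α x p) q + η p (α x q)) (a b c : H × P) :
    (extJacobiator α η a b c).1 = 0 := by
  obtain ⟨x, p⟩ := a
  obtain ⟨y, q⟩ := b
  obtain ⟨z, r⟩ := c
  simp only [extJacobiator, extBracket, Prod.fst_add, map_add, map_sub, lie_add,
    LinearMap.add_apply, hinv]
  rw [hanti (α x q) r, hanti (α y r) p, hanti (α z p) q]
  calc _ = ⁅x, ⁅y, z⁆⁆ + ⁅y, ⁅z, x⁆⁆ + ⁅z, ⁅x, y⁆⁆ := by abel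
    _ = 0 := lie_jacobi x y z

theorem extJacobiator_snd (a b c : H × P) :
    (extJacobiator α η a b c).2 =
      -(α (η b.2 c.2) a.2 + α (η c.2 a.2) b.2 + α (η a.2 b.2) c.2) := by
  simp only [extJacobiator, extBracket, Prod.snd_add, map_add, map_sub, LinearMap.add_apply,
    LieHom.map_lie, Ring.lie_def, LinearMap.sub_apply, Module.End.mul_apply]
  abel

end ExtJacobiator

/-- for a Lie algebra `h` acting on `p` via `α`, and an `α`-invariant
antisymmetric `h`-valued bilinear form `η` on `p`, the extended bracket on `g = h ⊕ p`
satisfies the Jacobi identity if and only if the curvature `R = α ∘ η` satisfies the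
first Bianchi identity. -/
theorem jacobi_iff_bianchi {H P : Type*} [LieRing H] [LieAlgebra ℂ H]
    [AddCommGroup P] [Module ℂ P]
    (α : H →ₗ⁅ℂ⁆ Module.End ℂ P) (η : P →ₗ[ℂ] P →ₗ[ℂ] H)
    (hanti : ∀ p q : P, η p q = -η q p)
    (hinv : ∀ (x : H) (p q : P), ⁅x, η p q⁆ = η (α x p) q + η p (α x q)) :
    (∀ a b c : H × P,
        extBracket α η a (extBracket α η b c) + extBracket α η b (extBracket α η c a) +
          extBracket α η c (extBracket α η a b) = 0) ↔
      (∀ p₁ p₂ p₃ : P,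
        α (η p₁ p₂) p₃ + α (η p₂ p₃) p₁ + α (η p₃ p₁) p₂ = 0) := by
  constructor
  · intro hJ p₁ p₂ p₃
    have hsnd := extJacobiator_snd α η (0, p₃) (0, p₁) (0, p₂)
    rw [extJacobiator, hJ] at hsnd
    exact neg_eq_zero.mp hsnd.symm
  · intro hB a b c
    refine Prod.ext (extJacobiator_fst α η hanti hinv a b c) ?_
    rw [← extJacobiator, extJacobiator_snd, hB, neg_zero, Prod.snd_zero]
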